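/- arXiv:1109.2462 — 2 statements merged into one kernel-verified Lean document; each statement's English description precedes it below -/
import Mathlib

section
/- Let k be a field of characteristic p > 0, n ≥ 1 and m ≥ 0. In the algebra A = k[y]/(y^{2p^n}) # (kℤ_{p^m})*, where the group algebra dual (kℤ_{p^m})* acts diagonally on k[y]/(y^{2p^n}) preserving the line ky, the Jacobson radical equals (y)·A, the quotient A/J(A) ≅ (kℤ_{p^m})*, and J(A)/J(A)² ≅ (kℤ_{p^m})* as an A/J(A)-bimodule. Consequently A is a Nakayama algebra whose Gabriel quiver is a single oriented cycle with p^m vertices. -/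
/-!
`Y` is normal (`Y * c = d * Y` for every `c`) and nilpotent, so `(Y)` is a two-sided nil ideal and
lies in the Jacobson radical. Reading off the coefficients of the basis vectors `Y ^ 0 * e j` gives
an algebra map onto `ZMod (p ^ m) → k` with kernel `(Y)`; as the target is a product of fields,
`(Y)` is the whole radical. The coefficients of `Y ^ 1 * e j` describe `J / J²` in the same way.

For the Nakayama property let `M` be indecomposable, `t + 1` the least power of `Y` killing `M`, and
`x = e i • x` with `Y ^ t • x ≠ 0`. A functional `f` detecting `Y ^ t • x` yields the `A`-linear
retraction `m ↦ ∑ a ≤ t, f (Y ^ (t - a) • m) • Y ^ a • x` of `M` onto `A ∙ x`, so `M = A ∙ x`.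
Every element of `A ∙ x` is `P(Y) • x` for a polynomial `P`, and `P(Y) = Q(Y) * Y ^ ord P` with
`Q(Y)` a unit, so the submodules of `M` form the chain `A ∙ Y ^ a • x`.
-/

/-- A module is indecomposable if it is nonzero and admits no nontrivial direct sum
decomposition. -/
def IsIndecomposableModule (A M : Type) [Ring A] [AddCommGroup M] [Module A M] : Prop :=
  Nontrivial M ∧ ∀ N₁ N₂ : Submodule A M, IsCompl N₁ N₂ → N₁ = ⊥ ∨ N₂ = ⊥

/-- A module is uniserial if its submodules are totally ordered by inclusion. -/
def IsUniserialModule (A M : Type) [Ring A] [AddCommGroup M] [Module A M] : Prop :=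
  ∀ N₁ N₂ : Submodule A M, N₁ ≤ N₂ ∨ N₂ ≤ N₁

/-- A Nakayama algebra: every indecomposable finitely generated module is uniserial. -/
def IsNakayamaAlgebra (A : Type) [Ring A] : Prop :=
  ∀ (M : Type) [AddCommGroup M] [Module A M],
    Module.Finite A M → IsIndecomposableModule A M → IsUniserialModule A M

open Polynomial

section Skew

variable {A : Type*} [Ring A] {s : ℕ} {Y : A} {e : ZMod s → A}

theorem e_mul_Y_pow (hskew : ∀ i, Y * e i = e (i + 1) * Y) (i : ZMod s) (a : ℕ) :
    e i * Y ^ a = Y ^ a * e (i - a) := by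
  induction a generalizing i with
  | zero => simp
  | succ a ih =>
    have hY : e (i - a) * Y = Y * e (i - (a + 1 : ℕ)) := by
      rw [hskew]; push_cast; ring_nf
    rw [pow_succ, ← mul_assoc, ih, mul_assoc, hY, ← mul_assoc, ← pow_succ]

theorem Y_pow_mul_e (hskew : ∀ i, Y * e i = e (i + 1) * Y) (i : ZMod s) (a : ℕ) :
    Y ^ a * e i = e (i + a) * Y ^ a := by
  rw [e_mul_Y_pow hskew, add_sub_cancel_right]

theorem e_mul_Y_mul_e (he : ∀ i j, e i * e j = if i = j then e i else 0)
    (hskew : ∀ i, Y * e i = e (i + 1) * Y) (i j : ZMod s) :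
    e i * (Y * e j) = if i = j + 1 then Y * e j else 0 := by
  rw [hskew, ← mul_assoc, he]
  split_ifs with h
  · rw [h]
  · rw [zero_mul]

end Skew

theorem Ideal.le_jacobson_bot_of_isNilpotent {R : Type*} [Ring R] {I : Ideal R}
    (hI : ∀ z ∈ I, IsNilpotent z) : I ≤ (⊥ : Ideal R).jacobson := by
  intro x hx
  rw [Ideal.mem_jacobson_iff]
  intro y
  obtain ⟨u, hu⟩ := (hI _ (I.mul_mem_left y hx)).isUnit_add_one
  refine ⟨↑u⁻¹, ?_⟩
  rw [Ideal.mem_bot, mul_assoc, ← sub_eq_zero.mpr (u.inv_mul), hu]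
  noncomm_ring

theorem Ideal.jacobson_bot_le_ker_of_surjective_pi {R K ι F : Type*} [Ring R] [DivisionRing K]
    [FunLike F R (ι → K)] [RingHomClass F R (ι → K)] (f : F) (hf : Function.Surjective f) :
    (⊥ : Ideal R).jacobson ≤ RingHom.ker f := by
  intro x hx
  rw [RingHom.mem_ker]
  funext j
  have hmax := RingHom.ker_isMaximal_of_surjective
    ((Pi.evalRingHom (fun _ : ι => K) j).comp (f : R →+* ι → K))
    ((Function.surjective_eval j).comp hf)
  exact (sInf_le ⟨bot_le, hmax⟩ : (⊥ : Ideal R).jacobson ≤ _) hx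

theorem Algebra.map_smul_of_adjoin_eq_top {k A M N : Type*} [CommSemiring k] [Semiring A]
    [Algebra k A] [AddCommMonoid M] [Module A M] [Module k M] [IsScalarTower k A M]
    [AddCommMonoid N] [Module A N] [Module k N] [IsScalarTower k A N]
    {S : Set A} (hS : Algebra.adjoin k S = ⊤) (ρ : M →ₗ[k] N)
    (hρ : ∀ y ∈ S, ∀ m, ρ (y • m) = y • ρ m) (a : A) (m : M) : ρ (a • m) = a • ρ m := by
  induction (hS ▸ Algebra.mem_top : a ∈ Algebra.adjoin k S) using Algebra.adjoin_induction
    generalizing m with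
  | mem y hy => exact hρ y hy m
  | algebraMap c => simp [algebraMap_smul]
  | add a a' _ _ ha ha' => simp [add_smul, ha, ha']
  | mul a a' _ _ ha ha' => simp [mul_smul, ha, ha']

theorem isUnit_aeval_of_coeff_zero_ne_zero {k A : Type*} [Field k] [Ring A] [Algebra k A]
    {Y : A} (hY : IsNilpotent Y) {q : k[X]} (hq : q.coeff 0 ≠ 0) : IsUnit (aeval Y q) := by
  have hnil : IsNilpotent (Y * aeval Y q.divX) := by
    refine Commute.isNilpotent_mul_right ?_ hY
    simpa using (commute_X q.divX).map (aeval Y)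
  rw [← X_mul_divX_add q, map_add, map_mul, aeval_X, aeval_C]
  exact hnil.isUnit_add_right_of_commute ((isUnit_iff_ne_zero.mpr hq).map _)
    (Algebra.commutes _ _).symm

section Generated

variable {k A : Type*} [CommSemiring k] [Ring A] [Algebra k A] {s : ℕ} {Y : A} {e : ZMod s → A}

theorem exists_Y_mul_eq_mul_Y (hskew : ∀ i, Y * e i = e (i + 1) * Y)
    (hgen : Algebra.adjoin k (insert Y (Set.range e)) = ⊤) (c : A) : ∃ d, Y * c = d * Y := by
  induction (hgen ▸ Algebra.mem_top : c ∈ Algebra.adjoin k (insert Y (Set.range e)))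
    using Algebra.adjoin_induction with
  | mem y hy =>
    obtain rfl | ⟨i, rfl⟩ := hy
    exacts [⟨y, rfl⟩, ⟨e (i + 1), hskew i⟩]
  | algebraMap r => exact ⟨algebraMap k A r, (Algebra.commutes r Y).symm⟩
  | add c c' _ _ hc hc' =>
    obtain ⟨d, hd⟩ := hc
    obtain ⟨d', hd'⟩ := hc'
    exact ⟨d + d', by rw [mul_add, hd, hd', add_mul]⟩
  | mul c c' _ _ hc hc' =>
    obtain ⟨d, hd⟩ := hc
    obtain ⟨d', hd'⟩ := hc'
    exact ⟨d * d', by rw [← mul_assoc, hd, mul_assoc, hd', mul_assoc]⟩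

theorem isTwoSided_span_Y (hskew : ∀ i, Y * e i = e (i + 1) * Y)
    (hgen : Algebra.adjoin k (insert Y (Set.range e)) = ⊤) : (Ideal.span {Y}).IsTwoSided := by
  refine ⟨fun c hz => ?_⟩
  obtain ⟨z, rfl⟩ := Ideal.mem_span_singleton'.mp hz
  obtain ⟨d, hd⟩ := exists_Y_mul_eq_mul_Y hskew hgen c
  rw [mul_assoc, hd, ← mul_assoc]
  exact Ideal.mul_mem_left _ _ (Ideal.mem_span_singleton_self Y)

theorem isNilpotent_of_mem_span_Y (hskew : ∀ i, Y * e i = e (i + 1) * Y)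
    (hgen : Algebra.adjoin k (insert Y (Set.range e)) = ⊤) (hY : IsNilpotent Y) {z : A}
    (hz : z ∈ Ideal.span {Y}) : IsNilpotent z := by
  obtain ⟨c, rfl⟩ := Ideal.mem_span_singleton'.mp hz
  have hpow : ∀ j : ℕ, ∃ d, (c * Y) ^ j = d * Y ^ j := by
    intro j
    induction j with
    | zero => exact ⟨1, by simp⟩
    | succ j ih =>
      obtain ⟨d, hd⟩ := ih
      obtain ⟨d', hd'⟩ := exists_Y_mul_eq_mul_Y hskew hgen d
      exact ⟨c * d', by rw [pow_succ', hd, mul_assoc, ← mul_assoc Y, hd', pow_succ']; noncomm_ring⟩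
  obtain ⟨N, hN⟩ := hY
  obtain ⟨d, hd⟩ := hpow N
  exact ⟨N, by rw [hd, hN, mul_zero]⟩

end Generated

theorem jacobson_bot_eq_span_Y {k A : Type*} [Field k] [Ring A] [Algebra k A] {s : ℕ}
    {Y : A} {e : ZMod s → A} (hskew : ∀ i, Y * e i = e (i + 1) * Y)
    (hgen : Algebra.adjoin k (insert Y (Set.range e)) = ⊤) (hY : IsNilpotent Y)
    {φ : A →ₐ[k] (ZMod s → k)} (hφ : Function.Surjective φ)
    (hker : RingHom.ker φ = Ideal.span {Y}) :
    (⊥ : Ideal A).jacobson = Ideal.span {Y} := by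
  refine le_antisymm (hker ▸ Ideal.jacobson_bot_le_ker_of_surjective_pi φ hφ) ?_
  exact Ideal.le_jacobson_bot_of_isNilpotent fun z hz =>
    isNilpotent_of_mem_span_Y hskew hgen hY hz

section Basis

variable {k A : Type*} [CommSemiring k] [Ring A] [Algebra k A] {N s : ℕ} {Y : A} {e : ZMod s → A}

theorem adjoin_eq_top_of_basis (b : Module.Basis (Fin N × ZMod s) k A)
    (hb : ∀ a i, b (a, i) = Y ^ (a : ℕ) * e i) :
    Algebra.adjoin k (insert Y (Set.range e)) = ⊤ := by
  refine eq_top_iff.mpr fun x _ => ?_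
  have hspan : Submodule.span k (Set.range b) ≤
      Subalgebra.toSubmodule (Algebra.adjoin k (insert Y (Set.range e))) := by
    rw [Submodule.span_le]
    rintro _ ⟨⟨a, i⟩, rfl⟩
    rw [hb]
    exact Subalgebra.mul_mem _ (Subalgebra.pow_mem _ (Algebra.subset_adjoin (by simp)) _)
      (Algebra.subset_adjoin (by simp))
  exact hspan (b.span_eq ▸ Submodule.mem_top)

theorem repr_Y_pow_mul_e (hnil : Y ^ N = 0) (b : Module.Basis (Fin N × ZMod s) k A)
    (hb : ∀ a i, b (a, i) = Y ^ (a : ℕ) * e i) (a : ℕ) (i : ZMod s)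
    (q : Fin N × ZMod s) : b.repr (Y ^ a * e i) q = if (q.1 : ℕ) = a ∧ q.2 = i then 1 else 0 := by
  by_cases ha : a < N
  · rw [← hb ⟨a, ha⟩, b.repr_self_apply]
    simp only [Prod.ext_iff, Fin.ext_iff, eq_comm]
  · rw [← Nat.add_sub_cancel' (not_lt.mp ha), pow_add, hnil, zero_mul, zero_mul, map_zero,
      if_neg (by omega)]
    rfl

theorem repr_sum_smul_Y_pow_mul_e (hnil : Y ^ N = 0) (b : Module.Basis (Fin N × ZMod s) k A)
    (hb : ∀ a i, b (a, i) = Y ^ (a : ℕ) * e i) [NeZero s] (a : ℕ) (c : ZMod s → k)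
    (q : Fin N × ZMod s) :
    b.repr (∑ i, c i • (Y ^ a * e i)) q = if (q.1 : ℕ) = a then c q.2 else 0 := by
  simp only [map_sum, map_smul, Finsupp.coe_finsetSum, Finset.sum_apply, Finsupp.smul_apply,
    repr_Y_pow_mul_e hnil b hb, smul_eq_mul, mul_ite, mul_one, mul_zero]
  split_ifs with h <;> simp [h]

theorem repr_mul_Y_pow_of_lt (hskew : ∀ i, Y * e i = e (i + 1) * Y) (hnil : Y ^ N = 0)
    (b : Module.Basis (Fin N × ZMod s) k A) (hb : ∀ a i, b (a, i) = Y ^ (a : ℕ) * e i)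
    (c : A) {ℓ : ℕ} {q : Fin N × ZMod s} (hq : (q.1 : ℕ) < ℓ) : b.repr (c * Y ^ ℓ) q = 0 := by
  induction (b.span_eq ▸ Submodule.mem_top : c ∈ Submodule.span k (Set.range b))
    using Submodule.span_induction with
  | mem y hy =>
    obtain ⟨⟨a, i⟩, rfl⟩ := hy
    rw [hb, mul_assoc, e_mul_Y_pow hskew, ← mul_assoc, ← pow_add,
      repr_Y_pow_mul_e hnil b hb, if_neg (by omega)]
  | zero => simp
  | add c c' _ _ hc hc' => simp [add_mul, hc, hc']
  | smul r c _ hc => simp [hc]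

theorem mem_span_Y_pow_iff (hskew : ∀ i, Y * e i = e (i + 1) * Y) (hnil : Y ^ N = 0)
    (b : Module.Basis (Fin N × ZMod s) k A) (hb : ∀ a i, b (a, i) = Y ^ (a : ℕ) * e i)
    [NeZero s] (ℓ : ℕ) (x : A) :
    x ∈ Ideal.span {Y ^ ℓ} ↔ ∀ q : Fin N × ZMod s, (q.1 : ℕ) < ℓ → b.repr x q = 0 := by
  constructor
  · rintro hx q hq
    obtain ⟨c, rfl⟩ := Ideal.mem_span_singleton'.mp hx
    exact repr_mul_Y_pow_of_lt hskew hnil b hb c hq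
  · intro hx
    rw [← b.sum_repr x]
    refine Submodule.sum_mem _ fun ⟨a, i⟩ _ => ?_
    by_cases ha : (a : ℕ) < ℓ
    · rw [hx _ ha, zero_smul]
      exact Submodule.zero_mem _
    · have hfactor : b (a, i) = (Y ^ ((a : ℕ) - ℓ) * e (i + ℓ)) * Y ^ ℓ := by
        rw [hb, mul_assoc, ← Y_pow_mul_e hskew, ← mul_assoc, ← pow_add,
          Nat.sub_add_cancel (not_lt.mp ha)]
      rw [hfactor, Algebra.smul_def, ← mul_assoc]
      exact Ideal.mul_mem_left _ _ (Ideal.mem_span_singleton_self _)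

end Basis

section Semisimple

variable {k A : Type*} [CommRing k] [Ring A] [Algebra k A] {N s : ℕ} [NeZero s] {Y : A}
  {e : ZMod s → A}

theorem sum_smul_mul_sum_smul (he : ∀ i j, e i * e j = if i = j then e i else 0)
    (c d : ZMod s → k) : (∑ i, c i • e i) * (∑ j, d j • e j) = ∑ i, (c i * d i) • e i := by
  simp [Finset.sum_mul, Finset.mul_sum, he, smul_smul, mul_comm]

theorem exists_algHom_pi_ker_eq_span_Y (he : ∀ i j, e i * e j = if i = j then e i else 0)
    (hsum : ∑ i, e i = 1) (hskew : ∀ i, Y * e i = e (i + 1) * Y) (hnil : Y ^ N = 0)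
    (b : Module.Basis (Fin N × ZMod s) k A) (hb : ∀ a i, b (a, i) = Y ^ (a : ℕ) * e i)
    (hN : 0 < N) :
    ∃ φ : A →ₐ[k] (ZMod s → k), Function.Surjective φ ∧ RingHom.ker φ = Ideal.span {Y} := by
  have := isTwoSided_span_Y hskew (adjoin_eq_top_of_basis b hb)
  let φ : A →ₗ[k] (ZMod s → k) := LinearMap.pi fun j => b.coord (⟨0, hN⟩, j)
  have hrepr (c : ZMod s → k) (j : ZMod s) : b.repr (∑ i, c i • e i) (⟨0, hN⟩, j) = c j := by
    simpa only [pow_zero, one_mul, if_true] using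
      repr_sum_smul_Y_pow_mul_e hnil b hb 0 c (⟨0, hN⟩, j)
  have hφ_sum (c : ZMod s → k) : φ (∑ i, c i • e i) = c := funext (hrepr c)
  have hφ_span {z : A} (hz : z ∈ Ideal.span {Y}) : φ z = 0 := by
    funext j
    exact (mem_span_Y_pow_iff hskew hnil b hb 1 z).mp (by rwa [pow_one]) _ zero_lt_one
  have hdecomp (x : A) : x - ∑ j, φ x j • e j ∈ Ideal.span {Y} := by
    rw [← pow_one Y, mem_span_Y_pow_iff hskew hnil b hb]
    rintro ⟨a, j⟩ (ha : (a : ℕ) < 1)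
    obtain rfl : a = ⟨0, hN⟩ := Fin.ext (Nat.lt_one_iff.mp ha)
    rw [map_sub, Finsupp.sub_apply, hrepr, sub_eq_zero]
    rfl
  have hmul (x y : A) : φ (x * y) = φ x * φ y := by
    set u := ∑ j, φ x j • e j
    set v := ∑ j, φ y j • e j
    have hxy : x * y = u * v + (u * (y - v) + (x - u) * y) := by noncomm_ring
    rw [hxy, map_add, hφ_span (Ideal.add_mem _ (Ideal.mul_mem_left _ _ (hdecomp y))
      (Ideal.mul_mem_right _ _ (hdecomp x))), add_zero, sum_smul_mul_sum_smul he, hφ_sum]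
    rfl
  have hone : φ 1 = 1 := by
    simpa [← hsum] using hφ_sum 1
  refine ⟨AlgHom.ofLinearMap φ hone hmul, fun c => ⟨_, hφ_sum c⟩, ?_⟩
  ext x
  refine ⟨fun hx => ?_, hφ_span⟩
  have hx : φ x = 0 := hx
  simpa [hx] using hdecomp x

theorem sub_sum_smul_Y_mul_e_mem_span (hskew : ∀ i, Y * e i = e (i + 1) * Y)
    (hnil : Y ^ N = 0) (b : Module.Basis (Fin N × ZMod s) k A)
    (hb : ∀ a i, b (a, i) = Y ^ (a : ℕ) * e i) (h1N : 1 < N) {x : A}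
    (hx : x ∈ Ideal.span {Y}) :
    x - ∑ j, b.repr x (⟨1, h1N⟩, j) • (Y * e j) ∈ Ideal.span {Y * Y} := by
  rw [← pow_one Y] at hx
  rw [← sq, mem_span_Y_pow_iff hskew hnil b hb]
  rintro ⟨a, j⟩ (ha : (a : ℕ) < 2)
  have hsum := repr_sum_smul_Y_pow_mul_e hnil b hb 1 (fun j => b.repr x (⟨1, h1N⟩, j)) (a, j)
  rw [pow_one] at hsum
  rw [map_sub, Finsupp.sub_apply, hsum]
  obtain ha0 | ha1 : (a : ℕ) = 0 ∨ (a : ℕ) = 1 := by omega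
  · simp [ha0, (mem_span_Y_pow_iff hskew hnil b hb 1 x).mp hx (a, j) (by simp [ha0])]
  · obtain rfl : a = ⟨1, h1N⟩ := Fin.ext ha1
    simp

theorem eq_zero_of_sum_smul_Y_mul_e_mem_span (hskew : ∀ i, Y * e i = e (i + 1) * Y)
    (hnil : Y ^ N = 0) (b : Module.Basis (Fin N × ZMod s) k A)
    (hb : ∀ a i, b (a, i) = Y ^ (a : ℕ) * e i) (h1N : 1 < N) {c : ZMod s → k}
    (hc : ∑ j, c j • (Y * e j) ∈ Ideal.span {Y * Y}) : c = 0 := by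
  rw [← sq, mem_span_Y_pow_iff hskew hnil b hb] at hc
  funext j
  have hrepr := repr_sum_smul_Y_pow_mul_e hnil b hb 1 c (⟨1, h1N⟩, j)
  rw [pow_one, if_pos rfl] at hrepr
  exact hrepr ▸ hc (⟨1, h1N⟩, j) one_lt_two

end Semisimple

section Modules

variable {k A M : Type*} [Field k] [Ring A] [Algebra k A] [AddCommGroup M] [Module A M]
  {s : ℕ} {Y : A} {e : ZMod s → A}

theorem span_aeval_smul_eq_span_Y_pow_smul (hY : IsNilpotent Y) {P : k[X]} (hP : P ≠ 0)
    (x : M) :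
    Submodule.span A {aeval Y P • x} = Submodule.span A {Y ^ P.natTrailingDegree • x} := by
  obtain ⟨q, hq⟩ : X ^ P.natTrailingDegree ∣ P :=
    X_pow_dvd_iff.mpr fun d hd => coeff_eq_zero_of_lt_natTrailingDegree hd
  have hq0 : q.coeff 0 ≠ 0 := by
    have hcoeff := coeff_X_pow_mul q P.natTrailingDegree 0
    rw [zero_add, ← hq] at hcoeff
    exact hcoeff ▸ mt trailingCoeff_eq_zero.mp hP
  obtain ⟨u, hu⟩ := isUnit_aeval_of_coeff_zero_ne_zero hY hq0
  conv_lhs => rw [hq, mul_comm, map_mul, aeval_X_pow, mul_smul, ← hu]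
  exact Submodule.span_singleton_group_smul_eq A u _

theorem e_smul_Y_pow_smul (he : ∀ i j, e i * e j = if i = j then e i else 0)
    (hskew : ∀ i, Y * e i = e (i + 1) * Y) {i : ZMod s} {x : M} (hx : e i • x = x)
    (j : ZMod s) (a : ℕ) : e j • Y ^ a • x = if j = i + a then Y ^ a • x else 0 := by
  have hcond : j - a = i ↔ j = i + a := by rw [sub_eq_iff_eq_add, add_comm]
  conv_lhs => rw [← hx, ← mul_smul, ← mul_smul, e_mul_Y_pow hskew, mul_assoc, he]
  by_cases h : j = i + a <;> simp [hcond, h, mul_smul, hx]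

theorem exists_aeval_smul_eq (he : ∀ i j, e i * e j = if i = j then e i else 0) {N : ℕ}
    (b : Module.Basis (Fin N × ZMod s) k A) (hb : ∀ a i, b (a, i) = Y ^ (a : ℕ) * e i)
    {i : ZMod s} {x : M} (hx : e i • x = x) (u : A) : ∃ P : k[X], u • x = aeval Y P • x := by
  induction (b.span_eq ▸ Submodule.mem_top : u ∈ Submodule.span k (Set.range b))
    using Submodule.span_induction with
  | mem y hy =>
    obtain ⟨⟨a, j⟩, rfl⟩ := hy
    refine ⟨if j = i then X ^ (a : ℕ) else 0, ?_⟩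
    rw [hb, mul_smul, ← hx, ← mul_smul (e j), he]
    split_ifs with h <;> simp [h, hx]
  | zero => exact ⟨0, by simp⟩
  | add u u' _ _ hu hu' =>
    obtain ⟨P, hP⟩ := hu
    obtain ⟨P', hP'⟩ := hu'
    exact ⟨P + P', by rw [add_smul, hP, hP', map_add, add_smul]⟩
  | smul c u _ hu =>
    obtain ⟨P, hP⟩ := hu
    exact ⟨c • P, by rw [map_smul, Algebra.smul_def, Algebra.smul_def, mul_smul, hP, mul_smul]⟩

theorem exists_span_eq_span_Y_pow_smul (he : ∀ i j, e i * e j = if i = j then e i else 0)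
    (hY : IsNilpotent Y) {N : ℕ} (b : Module.Basis (Fin N × ZMod s) k A)
    (hb : ∀ a i, b (a, i) = Y ^ (a : ℕ) * e i) {i : ZMod s} {x : M} (hx : e i • x = x)
    {y : M} (hy : y ∈ Submodule.span A {x}) :
    ∃ a, Submodule.span A {y} = Submodule.span A {Y ^ a • x} := by
  obtain ⟨u, rfl⟩ := Submodule.mem_span_singleton.mp hy
  obtain ⟨P, hP⟩ := exists_aeval_smul_eq he b hb hx u
  rcases eq_or_ne P 0 with rfl | hP0
  · obtain ⟨n, hn⟩ := hY
    exact ⟨n, by simp [hP, hn]⟩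
  · exact ⟨_, hP ▸ span_aeval_smul_eq_span_Y_pow_smul hY hP0 x⟩

theorem exists_e_smul_eq_self_and_Y_pow_smul_ne_zero [NeZero s] [Nontrivial M]
    (he : ∀ i j, e i * e j = if i = j then e i else 0) (hsum : ∑ i, e i = 1)
    (hY : IsNilpotent Y) :
    ∃ (t : ℕ) (i : ZMod s) (x : M), e i • x = x ∧ Y ^ t • x ≠ 0 ∧ ∀ m : M, Y ^ (t + 1) • m = 0 := by
  classical
  have hex : ∃ T, ∀ m : M, Y ^ T • m = 0 := hY.imp fun T hT m => by rw [hT, zero_smul]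
  have hT0 : Nat.find hex ≠ 0 := by
    intro h
    obtain ⟨m, hm⟩ := exists_ne (0 : M)
    exact hm (by simpa [h] using Nat.find_spec hex m)
  obtain ⟨t, ht⟩ : ∃ t, Nat.find hex = t + 1 := ⟨Nat.find hex - 1, by omega⟩
  obtain ⟨m, hm⟩ : ∃ m : M, Y ^ t • m ≠ 0 := by
    by_contra! h
    exact Nat.find_min hex (by omega) h
  obtain ⟨i, hi⟩ : ∃ i, Y ^ t • e i • m ≠ 0 := by
    by_contra! h
    refine hm ?_
    rw [← one_smul A m, ← hsum, Finset.sum_smul, Finset.smul_sum]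
    exact Finset.sum_eq_zero fun i _ => h i
  refine ⟨t, i, e i • m, by rw [← mul_smul, he, if_pos rfl], hi, ?_⟩
  rw [← ht]
  exact Nat.find_spec hex

theorem isUniserialModule_of_span_singleton_total {R N : Type} [Ring R] [AddCommGroup N]
    [Module R N]
    (h : ∀ y z : N, Submodule.span R {y} ≤ Submodule.span R {z} ∨
      Submodule.span R {z} ≤ Submodule.span R {y}) :
    IsUniserialModule R N := by
  intro N₁ N₂
  by_contra! hne
  obtain ⟨⟨y, hy₁, hy₂⟩, ⟨z, hz₂, hz₁⟩⟩ :=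
    And.intro (SetLike.not_le_iff_exists.mp hne.1) (SetLike.not_le_iff_exists.mp hne.2)
  rcases h y z with hyz | hzy
  · exact hy₂ (hyz.trans ((Submodule.span_singleton_le_iff_mem _ _).mpr hz₂)
      (Submodule.mem_span_singleton_self y))
  · exact hz₁ (hzy.trans ((Submodule.span_singleton_le_iff_mem _ _).mpr hy₁)
      (Submodule.mem_span_singleton_self z))

end Modules

section Retraction

variable {k A M : Type*} [Field k] [Ring A] [Algebra k A] [AddCommGroup M] [Module A M]
  [Module k M] [IsScalarTower k A M] {s : ℕ} {Y : A} {e : ZMod s → A}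

theorem Y_pow_smul_notMem_span (hY : IsNilpotent Y) {x : M} {t : ℕ} (hxt : Y ^ t • x ≠ 0) :
    Y ^ t • x ∉ Submodule.span k (Set.range fun a : Fin t => Y ^ (a : ℕ) • x) := by
  intro hmem
  obtain ⟨c, hc⟩ := (Submodule.mem_span_range_iff_exists_fun k).mp hmem
  set P : k[X] := X ^ t - ∑ a : Fin t, C (c a) * X ^ (a : ℕ)
  have hPt : P.coeff t = 1 := by
    simp only [P, coeff_sub, finsetSum_coeff, coeff_C_mul_X_pow, coeff_X_pow_self]
    rw [Finset.sum_eq_zero fun a _ => if_neg a.is_lt.ne', sub_zero]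
  have hP0 : P ≠ 0 := fun h => by simp [h] at hPt
  have hPx : aeval Y P • x = 0 := by
    simp [P, sub_smul, Finset.sum_smul, mul_smul, algebraMap_smul, hc]
  have hspan := span_aeval_smul_eq_span_Y_pow_smul hY hP0 x
  rw [hPx, Submodule.span_zero_singleton, eq_comm, Submodule.span_singleton_eq_bot] at hspan
  apply hxt
  have hle : P.natTrailingDegree ≤ t := natTrailingDegree_le_of_ne_zero (hPt ▸ one_ne_zero)
  rw [← Nat.sub_add_cancel hle, pow_add, mul_smul, hspan, smul_zero]

theorem exists_dual_apply_Y_pow_smul (he : ∀ i j, e i * e j = if i = j then e i else 0)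
    (hskew : ∀ i, Y * e i = e (i + 1) * Y) (hY : IsNilpotent Y) {t : ℕ} {i : ZMod s} {x : M}
    (hx : e i • x = x) (hxt : Y ^ t • x ≠ 0) (htop : ∀ m : M, Y ^ (t + 1) • m = 0) :
    ∃ f : Module.Dual k M, (∀ a : ℕ, f (Y ^ a • x) = if a = t then 1 else 0) ∧
      ∀ j m, f (e j • m) = if i + t = j then f m else 0 := by
  obtain ⟨f₀, hf₀x, hf₀W⟩ :=
    Submodule.exists_dual_map_eq_bot_of_notMem (R := k) (Y_pow_smul_notMem_span hY hxt)
      inferInstance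
  -- Precomposing with `e (i + t)` makes `f` see only the `e (i + t)`-component.
  refine ⟨(f₀ (Y ^ t • x))⁻¹ • f₀ ∘ₗ DistribSMul.toLinearMap k M (e (i + t)),
    fun a => ?_, fun j m => ?_⟩
  · simp only [LinearMap.smul_apply, LinearMap.comp_apply, DistribSMul.toLinearMap_apply,
      e_smul_Y_pow_smul he hskew hx, add_right_inj, smul_eq_mul]
    rcases lt_trichotomy a t with hat | rfl | hat
    · have hW : f₀ (Y ^ a • x) ∈ (⊥ : Submodule k k) :=
        hf₀W ▸ Submodule.mem_map_of_mem (Submodule.subset_span ⟨⟨a, hat⟩, rfl⟩)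
      rw [if_neg hat.ne]
      split_ifs <;> simp [(Submodule.mem_bot k).mp hW]
    · simp [hf₀x]
    · have hzero : Y ^ a • x = 0 := by
        rw [← Nat.sub_add_cancel hat, pow_add, mul_smul, htop, smul_zero]
      simp [hzero, hat.ne']
  · simp only [LinearMap.smul_apply, LinearMap.comp_apply, DistribSMul.toLinearMap_apply,
      ← mul_smul, he]
    split_ifs <;> simp

def cyclicRetraction (Y : A) (x : M) (f : Module.Dual k M) (t : ℕ) : M →ₗ[k] M :=
  ∑ a ∈ Finset.range (t + 1),
    (f ∘ₗ DistribSMul.toLinearMap k M (Y ^ (t - a))).smulRight (Y ^ a • x)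

theorem cyclicRetraction_apply (x : M) (f : Module.Dual k M) (t : ℕ) (m : M) :
    cyclicRetraction Y x f t m = ∑ a ∈ Finset.range (t + 1), f (Y ^ (t - a) • m) • Y ^ a • x := by
  simp [cyclicRetraction]

theorem cyclicRetraction_mem_span (x : M) (f : Module.Dual k M) (t : ℕ) (m : M) :
    cyclicRetraction Y x f t m ∈ Submodule.span A {x} := by
  rw [cyclicRetraction_apply]
  exact Submodule.sum_mem _ fun a _ => Submodule.smul_of_tower_mem _ _
    (Submodule.smul_mem _ _ (Submodule.mem_span_singleton_self x))

theorem cyclicRetraction_self {x : M} {f : Module.Dual k M} {t : ℕ}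
    (hf : ∀ a : ℕ, f (Y ^ a • x) = if a = t then 1 else 0) :
    cyclicRetraction Y x f t x = x := by
  rw [cyclicRetraction_apply, Finset.sum_eq_single 0]
  · simp [hf]
  · intro a ha ha0
    rw [hf, if_neg (by simp at ha; omega), zero_smul]
  · simp

theorem cyclicRetraction_Y_smul {x : M} {f : Module.Dual k M} {t : ℕ}
    (htop : ∀ m : M, Y ^ (t + 1) • m = 0) (m : M) :
    cyclicRetraction Y x f t (Y • m) = Y • cyclicRetraction Y x f t m := by
  set G : ℕ → M := fun a => f (Y ^ (t + 1 - a) • m) • Y ^ a • x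
  have hlhs : cyclicRetraction Y x f t (Y • m) = ∑ a ∈ Finset.range (t + 1), G a := by
    rw [cyclicRetraction_apply]
    refine Finset.sum_congr rfl fun a ha => ?_
    rw [← mul_smul, ← pow_succ, ← Nat.sub_add_comm (by simp at ha; omega)]
  have hrhs : Y • cyclicRetraction Y x f t m = ∑ a ∈ Finset.range (t + 1), G (a + 1) := by
    rw [cyclicRetraction_apply, Finset.smul_sum]
    refine Finset.sum_congr rfl fun a _ => ?_
    rw [smul_comm, ← mul_smul, ← pow_succ']
    simp only [G, Nat.add_sub_add_right]
  -- The two sums differ by the boundary terms `G 0` and `G (t + 1)`, both killed by `Y ^ (t + 1)`.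
  have hG0 : G 0 = 0 := by simp [G, htop]
  have hGt : G (t + 1) = 0 := by simp [G, htop]
  rw [hlhs, hrhs, ← add_zero (Finset.sum _ _), ← hGt, ← Finset.sum_range_succ,
    Finset.sum_range_succ', hG0, add_zero]

theorem cyclicRetraction_e_smul (he : ∀ i j, e i * e j = if i = j then e i else 0)
    (hskew : ∀ i, Y * e i = e (i + 1) * Y) {t : ℕ} {i : ZMod s} {x : M}
    {f : Module.Dual k M} (hx : e i • x = x)
    (hf : ∀ j m, f (e j • m) = if i + t = j then f m else 0) (j : ZMod s) (m : M) :
    cyclicRetraction Y x f t (e j • m) = e j • cyclicRetraction Y x f t m := by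
  rw [cyclicRetraction_apply, cyclicRetraction_apply, Finset.smul_sum]
  refine Finset.sum_congr rfl fun a ha => ?_
  have hcond : i + t = j + ((t - a : ℕ) : ZMod s) ↔ j = i + a := by
    rw [Nat.cast_sub (by simp at ha; omega)]
    constructor <;> intro h <;> linear_combination -h
  rw [← mul_smul, Y_pow_mul_e hskew, mul_smul, hf, smul_comm (e j),
    e_smul_Y_pow_smul he hskew hx]
  simp only [hcond]
  split_ifs <;> simp

end Retraction

theorem span_Y_pow_smul_antitone {A M : Type*} [Ring A] [AddCommGroup M] [Module A M] (Y : A)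
    (x : M) : Antitone fun a : ℕ => Submodule.span A {Y ^ a • x} := by
  intro a c hac
  rw [Submodule.span_singleton_le_iff_mem, Submodule.mem_span_singleton]
  exact ⟨Y ^ (c - a), by rw [← mul_smul, ← pow_add, Nat.sub_add_cancel hac]⟩

theorem span_singleton_eq_top_of_retraction {R N : Type} [Ring R] [AddCommGroup N] [Module R N]
    (hN : IsIndecomposableModule R N) {x : N} (hx : x ≠ 0) (r : N →ₗ[R] N)
    (hr : ∀ m, r m ∈ Submodule.span R {x}) (hrx : r x = x) : Submodule.span R {x} = ⊤ := by
  have hproj : ∀ y : Submodule.span R {x}, r.codRestrict _ hr y = y := by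
    rintro ⟨y, hy⟩
    obtain ⟨u, rfl⟩ := Submodule.mem_span_singleton.mp hy
    ext
    simp [hrx]
  have hcompl := LinearMap.isCompl_of_proj hproj
  rcases hN.2 _ _ hcompl with h | h
  · exact absurd (Submodule.span_singleton_eq_bot.mp h) hx
  · simpa [h] using hcompl.sup_eq_top

theorem isNakayamaAlgebra_of_basis {k A : Type} [Field k] [Ring A] [Algebra k A] {N s : ℕ}
    [NeZero s] {Y : A} {e : ZMod s → A} (he : ∀ i j, e i * e j = if i = j then e i else 0)
    (hsum : ∑ i, e i = 1) (hskew : ∀ i, Y * e i = e (i + 1) * Y) (hnil : Y ^ N = 0)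
    (b : Module.Basis (Fin N × ZMod s) k A) (hb : ∀ a i, b (a, i) = Y ^ (a : ℕ) * e i) :
    IsNakayamaAlgebra A := by
  intro M _ _ _ hM
  let _ : Module k M := Module.compHom M (algebraMap k A)
  have : IsScalarTower k A M := .of_algebraMap_smul fun _ _ => rfl
  have := hM.1
  have hY : IsNilpotent Y := ⟨N, hnil⟩
  obtain ⟨t, i, x, hx, hxt, htop⟩ :=
    exists_e_smul_eq_self_and_Y_pow_smul_ne_zero (M := M) he hsum hY
  obtain ⟨f, hfY, hfe⟩ := exists_dual_apply_Y_pow_smul (k := k) he hskew hY hx hxt htop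
  let r : M →ₗ[A] M :=
    { cyclicRetraction Y x f t with
      map_smul' := Algebra.map_smul_of_adjoin_eq_top (adjoin_eq_top_of_basis b hb) _ <| by
        rintro _ (rfl | ⟨j, rfl⟩)
        exacts [cyclicRetraction_Y_smul htop, cyclicRetraction_e_smul he hskew hx hfe j] }
  have hxtop : Submodule.span A {x} = ⊤ :=
    span_singleton_eq_top_of_retraction hM (fun h => hxt (by rw [h, smul_zero])) r
      (cyclicRetraction_mem_span x f t) (cyclicRetraction_self hfY)
  have hmem (y : M) : y ∈ Submodule.span A {x} := by
    rw [hxtop]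
    exact Submodule.mem_top
  refine isUniserialModule_of_span_singleton_total fun y z => ?_
  obtain ⟨a, ha⟩ := exists_span_eq_span_Y_pow_smul he hY b hb hx (hmem y)
  obtain ⟨c, hc⟩ := exists_span_eq_span_Y_pow_smul he hY b hb hx (hmem z)
  rw [ha, hc]
  rcases le_total a c with hac | hca
  exacts [Or.inr (span_Y_pow_smul_antitone Y x hac), Or.inl (span_Y_pow_smul_antitone Y x hca)]

theorem stmt_12_general (k : Type) [Field k] (p : ℕ) (hp : p.Prime)
    (n m : ℕ) [NeZero (p ^ m)]
    (A : Type) [Ring A] [Algebra k A]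
    (Y : A) (e : ZMod (p ^ m) → A)
    (he : ∀ i j, e i * e j = if i = j then e i else 0)
    (hsum : ∑ i, e i = 1)
    (hskew : ∀ i, Y * e i = e (i + 1) * Y)
    (hnil : Y ^ (2 * p ^ n) = 0)
    (b : Module.Basis (Fin (2 * p ^ n) × ZMod (p ^ m)) k A)
    (hb : ∀ a i, b (a, i) = Y ^ (a : ℕ) * e i) :
    -- the Jacobson radical is the ideal generated by `Y`
    (⊥ : Ideal A).jacobson = Ideal.span {Y} ∧
    -- `A / J(A) ≅ (kℤ_{p^m})*`
    (∃ φ : A →ₐ[k] (ZMod (p ^ m) → k),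
      Function.Surjective φ ∧ RingHom.ker φ = Ideal.span {Y}) ∧
    -- the classes of the `Y * e j` form a `k`-basis of `J/J²`
    (∀ x ∈ Ideal.span {Y}, ∃ c : ZMod (p ^ m) → k,
      x - ∑ j, c j • (Y * e j) ∈ Ideal.span {Y * Y}) ∧
    (∀ c : ZMod (p ^ m) → k,
      (∑ j, c j • (Y * e j)) ∈ Ideal.span {Y * Y} → c = 0) ∧
    -- the cyclic quiver structure: the class of `Y * e j` is an arrow from `j` to `j+1`
    (∀ j : ZMod (p ^ m), e (j + 1) * (Y * e j) = Y * e j ∧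
      ∀ i : ZMod (p ^ m), i ≠ j + 1 → e i * (Y * e j) = 0) ∧
    -- `A` is a Nakayama algebra
    IsNakayamaAlgebra A := by
  have h1N : 1 < 2 * p ^ n := by
    have := Nat.one_le_pow n p hp.pos
    omega
  obtain ⟨φ, hφ, hker⟩ := exists_algHom_pi_ker_eq_span_Y he hsum hskew hnil b hb (by omega)
  refine ⟨jacobson_bot_eq_span_Y hskew (adjoin_eq_top_of_basis b hb) ⟨_, hnil⟩ hφ hker,
    ⟨φ, hφ, hker⟩, fun x hx => ⟨_, sub_sum_smul_Y_mul_e_mem_span hskew hnil b hb h1N hx⟩,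
    fun c hc => eq_zero_of_sum_smul_Y_mul_e_mem_span hskew hnil b hb h1N hc,
    fun j => ⟨?_, fun i hij => ?_⟩, isNakayamaAlgebra_of_basis he hsum hskew hnil b hb⟩
  · rw [e_mul_Y_mul_e he hskew, if_pos rfl]
  · rw [e_mul_Y_mul_e he hskew, if_neg hij]

theorem stmt_12 (k : Type) [Field k] (p : ℕ) (hp : p.Prime) [CharP k p]
    (n m : ℕ) (hn : 1 ≤ n) [NeZero (p ^ m)]
    (A : Type) [Ring A] [Algebra k A]
    (Y : A) (e : ZMod (p ^ m) → A)
    (he : ∀ i j, e i * e j = if i = j then e i else 0)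
    (hsum : ∑ i, e i = 1)
    (hskew : ∀ i, Y * e i = e (i + 1) * Y)
    (hnil : Y ^ (2 * p ^ n) = 0)
    (b : Module.Basis (Fin (2 * p ^ n) × ZMod (p ^ m)) k A)
    (hb : ∀ a i, b (a, i) = Y ^ (a : ℕ) * e i) :
    -- the Jacobson radical is the ideal generated by `Y`
    (⊥ : Ideal A).jacobson = Ideal.span {Y} ∧
    -- `A / J(A) ≅ (kℤ_{p^m})*`
    (∃ φ : A →ₐ[k] (ZMod (p ^ m) → k),
      Function.Surjective φ ∧ RingHom.ker φ = Ideal.span {Y}) ∧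
    -- the classes of the `Y * e j` form a `k`-basis of `J/J²`
    (∀ x ∈ Ideal.span {Y}, ∃ c : ZMod (p ^ m) → k,
      x - ∑ j, c j • (Y * e j) ∈ Ideal.span {Y * Y}) ∧
    (∀ c : ZMod (p ^ m) → k,
      (∑ j, c j • (Y * e j)) ∈ Ideal.span {Y * Y} → c = 0) ∧
    -- the cyclic quiver structure: the class of `Y * e j` is an arrow from `j` to `j+1`
    (∀ j : ZMod (p ^ m), e (j + 1) * (Y * e j) = Y * e j ∧
      ∀ i : ZMod (p ^ m), i ≠ j + 1 → e i * (Y * e j) = 0) ∧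
    -- `A` is a Nakayama algebra
    IsNakayamaAlgebra A :=
  stmt_12_general k p hp n m A Y e he hsum hskew hnil b hb
end

section
/- In Example 6.7 with p = 3: the algebra u(L)e₁ ⋊ kℤ₂ (the bosonization/smash product of the block u(L)e₁ with the group algebra of ℤ₂ acting by the parity automorphism) is isomorphic to the full matrix algebra M₆(k), via the explicit assignment t₁ ↦ diag(0,0, I₂, 2I₂ blocks), y ↦ the block matrix with I_{1,2} = [[0,1],[1,0]] in the (1,2), (2,3), (3,1) block positions, x ↦ the block matrix with −I₂ on the diagonal blocks and I₂ in positions (1,3),(2,1),(3,2), and g ↦ diag(I_{2,−1}, I_{2,−1}, I_{2,−1}) where I_{2,−1} = [[1,0],[0,−1]]. -/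
/-!
STATEMENT 19: (Example 6.7, `p = 3`.)  The bosonization `u(L)e₁ ⋊ kℤ₂` — presented as the
algebra `B` generated by `x, y, t₁, g` with relations `y² = x + 1`, `x³ = 0`, `t₁³ = t₁`,
`t₁y − yt₁ = 2y`, `t₁x − xt₁ = x + 1`, `xy = yx`, `g² = 1`, `g` commuting with `x, t₁` and
anticommuting with `y`, with `k`-basis `{yᵃ t₁ᵇ gᶜ}` — is isomorphic to `M₆(k)` via the
explicit matrix assignment of the paper.
-/

/-- The image of `t₁`: `diag(0,0)⊕I₂⊕2I₂`. -/
def Tmat (k : Type) [Field k] : Matrix (Fin 6) (Fin 6) k :=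
  Matrix.diagonal ![0, 0, 1, 1, 2, 2]

/-- The image of `y`: `I_{1,2} = [[0,1],[1,0]]` in block positions (1,2), (2,3), (3,1). -/
def Ymat (k : Type) [Field k] : Matrix (Fin 6) (Fin 6) k :=
  !![0, 0, 0, 1, 0, 0;
     0, 0, 1, 0, 0, 0;
     0, 0, 0, 0, 0, 1;
     0, 0, 0, 0, 1, 0;
     0, 1, 0, 0, 0, 0;
     1, 0, 0, 0, 0, 0]

/-- The image of `x`: `−I₂` on the diagonal blocks and `I₂` in positions (1,3), (2,1), (3,2). -/
def Xmat (k : Type) [Field k] : Matrix (Fin 6) (Fin 6) k :=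
  !![-1,  0,  0,  0,  1,  0;
      0, -1,  0,  0,  0,  1;
      1,  0, -1,  0,  0,  0;
      0,  1,  0, -1,  0,  0;
      0,  0,  1,  0, -1,  0;
      0,  0,  0,  1,  0, -1]

/-- The image of `g`: `diag(I_{2,−1}, I_{2,−1}, I_{2,−1})` with `I_{2,−1} = diag(1,−1)`. -/
def Gmat (k : Type) [Field k] : Matrix (Fin 6) (Fin 6) k :=
  Matrix.diagonal ![1, -1, 1, -1, 1, -1]

/-!
Send the basis monomial `yⁱ t₁ʲ gᶜ` of `B` to `Yⁱ Tʲ Gᶜ`, where `Y, T, G` are the given matrices;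
this defines a linear map `φ`. Right multiplication of a monomial by `y`, `t₁` or `g` is rewritten
into monomials using only `t₁ y = y (t₁ + 2)`, `g y = -y g`, `g t₁ = t₁ g`, `g² = 1`, `t₁³ = t₁` and
`y⁶ = (x + 1)³ = 1` (characteristic 3), which the matrices satisfy as well. Hence `φ` commutes with
these right multiplications, and since `y, t₁, g` generate `B`, it is an algebra map.

Its image contains `E₀₀ = (T² - 1)(1 + G)` and the permutation matrix `Y` of the 6-cycle
`(0 3 4 1 2 5)`, so every matrix unit `Yᵃ E₀₀ Yᵇ`: `φ` is onto, hence bijective because both sides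
have dimension 36. The matrix identities are checked over `ZMod 3` and transported to `k`.
-/

open Polynomial

theorem pow_succ_eq_pow_mod_succ {M : Type*} [Monoid M] {a : M} {d : ℕ}
    (ha : a ^ (d + 1) = a) (n : ℕ) : a ^ (n + 1) = a ^ (n % d + 1) := by
  have key (r q : ℕ) : a ^ (r + d * q + 1) = a ^ (r + 1) := by
    induction q with
    | zero => simp
    | succ q ih =>
      rw [show r + d * (q + 1) + 1 = r + d * q + 1 + d by ring, pow_add, ih, pow_succ,
        mul_assoc, ← pow_succ', ha]
  conv_lhs => rw [← Nat.mod_add_div n d]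
  exact key _ _

theorem pow_six_eq_one_of_mul_self_eq {R : Type*} [Ring R] {x y : R} (h3 : (3 : R) = 0)
    (hy : y * y = x + 1) (hx : x ^ 3 = 0) : y ^ 6 = 1 :=
  calc y ^ 6 = (y * y) ^ 3 := by rw [← pow_two, ← pow_mul]
    _ = x ^ 3 + 3 * (x ^ 2 + x) + 1 := by rw [hy]; noncomm_ring
    _ = 1 := by rw [hx, h3]; simp

theorem LinearMap.map_mul_right_of_basis {ι R A C : Type*} [CommSemiring R] [Semiring A]
    [Algebra R A] [Semiring C] [Algebra R C] (f : A →ₗ[R] C) (b : Module.Basis ι R A)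
    {s : A} {S : C} (h : ∀ i, f (b i * s) = f (b i) * S) (u : A) : f (u * s) = f u * S :=
  LinearMap.congr_fun (b.ext (f₁ := f ∘ₗ LinearMap.mulRight R s)
    (f₂ := LinearMap.mulRight R S ∘ₗ f) h) u

theorem LinearMap.map_mul_of_adjoin_eq_top {R A C : Type*} [CommSemiring R] [Semiring A]
    [Algebra R A] [Semiring C] [Algebra R C] (f : A →ₗ[R] C) {s : Set A}
    (hs : Algebra.adjoin R s = ⊤) (h1 : f 1 = 1) (h : ∀ a ∈ s, ∀ u, f (u * a) = f u * f a)
    (u v : A) : f (u * v) = f u * f v := by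
  have hv : v ∈ Algebra.adjoin R s := hs ▸ Algebra.mem_top
  induction hv using Algebra.adjoin_induction generalizing u with
  | mem a ha => exact h a ha u
  | algebraMap r => simp [Algebra.algebraMap_eq_smul_one, h1]
  | add a b _ _ ha hb => simp only [mul_add, map_add, ha, hb]
  | mul a b _ _ ha hb => rw [← mul_assoc, hb, ha, hb, mul_assoc]

theorem Algebra.adjoin_eq_top_of_basis {ι R A : Type*} [CommSemiring R] [Semiring A]
    [Algebra R A] (b : Module.Basis ι R A) {s : Set A} (h : ∀ i, b i ∈ Algebra.adjoin R s) :
    Algebra.adjoin R s = ⊤ := by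
  rw [← Algebra.toSubmodule_eq_top, ← top_le_iff, ← b.span_eq, Submodule.span_le]
  exact Set.range_subset_iff.2 h

theorem Matrix.subalgebra_eq_top_of_single_mem {n R : Type*} [Fintype n] [DecidableEq n]
    [CommSemiring R] {S : Subalgebra R (Matrix n n R)} (h : ∀ i j, single i j 1 ∈ S) :
    S = ⊤ := by
  refine eq_top_iff.2 fun M _ => ?_
  rw [matrix_eq_sum_single M]
  refine Subalgebra.sum_mem _ fun i _ => Subalgebra.sum_mem _ fun j _ => ?_
  simpa [smul_single] using Subalgebra.smul_mem S (h i j) (M i j)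

theorem RingHom.mapMatrix_single_one {n R S : Type*} [Fintype n] [DecidableEq n]
    [NonAssocSemiring R] [NonAssocSemiring S] (f : R →+* S) (i j : n) :
    f.mapMatrix (Matrix.single i j 1) = Matrix.single i j 1 := by
  simp [RingHom.mapMatrix_apply]

/-- Relations of `u(L)e₁ ⋊ kℤ₂` in `y, t₁, g`; there `y⁶ = (x + 1)³ = 1` in characteristic 3. -/
structure BosonizationRelations {R : Type*} [Ring R] (y t g : R) : Prop where
  y_pow_six : y ^ 6 = 1
  t_pow_three : t ^ 3 = t
  t_mul_y_sub : t * y - y * t = 2 * y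
  g_mul_self : g * g = 1
  g_mul_t : g * t = t * g
  g_mul_y : g * y = -(y * g)

namespace BosonizationRelations

variable {R : Type*} [Ring R] {y t g : R}

theorem map {S : Type*} [Ring S] (h : BosonizationRelations y t g) (f : R →+* S) :
    BosonizationRelations (f y) (f t) (f g) where
  y_pow_six := by rw [← map_pow, h.y_pow_six, map_one]
  t_pow_three := by rw [← map_pow, h.t_pow_three]
  t_mul_y_sub := by rw [← map_mul, ← map_mul, ← map_sub, h.t_mul_y_sub, map_mul, map_ofNat]
  g_mul_self := by rw [← map_mul, h.g_mul_self, map_one]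
  g_mul_t := by rw [← map_mul, h.g_mul_t, map_mul]
  g_mul_y := by rw [← map_mul, h.g_mul_y, map_neg, map_mul]

theorem pow_mul_pow_mul_pow_mul_t (h : BosonizationRelations y t g) (a b c : ℕ) :
    y ^ a * t ^ b * g ^ c * t = y ^ a * t ^ (b + 1) * g ^ c := by
  rw [mul_assoc, (Commute.pow_left h.g_mul_t c).eq, ← mul_assoc, mul_assoc (y ^ a),
    ← pow_succ]

theorem pow_mul_pow_mul_pow_mul_y (h : BosonizationRelations y t g) (a b c : ℕ) :
    y ^ a * t ^ b * g ^ c * y = y ^ (a + 1) * (t + 2) ^ b * (-g) ^ c := by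
  have hty : SemiconjBy y (t + 2) t := by
    rw [SemiconjBy, mul_add, eq_comm, ← sub_eq_iff_eq_add', h.t_mul_y_sub]
    exact (Commute.ofNat_left 2 y).eq
  have hgy : SemiconjBy y (-g) g := by rw [SemiconjBy, mul_neg, h.g_mul_y]
  calc y ^ a * t ^ b * g ^ c * y = y ^ a * (t ^ b * y) * (-g) ^ c := by
        rw [mul_assoc, ← (hgy.pow_right c).eq]; simp only [mul_assoc]
    _ = y ^ (a + 1) * (t + 2) ^ b * (-g) ^ c := by
        rw [← (hty.pow_right b).eq, pow_succ]; simp only [mul_assoc]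

end BosonizationRelations

section MonomialBasis

variable {k B A : Type*} [CommRing k] [Ring B] [Algebra k B] [Ring A] [Algebra k A]

def IsMonomialBasis (b : Module.Basis (Fin 6 × Fin 3 × Fin 2) k B) (y t g : B) : Prop :=
  ∀ (i : Fin 6) (j : Fin 3) (c : Fin 2), b (i, j, c) = y ^ (i : ℕ) * t ^ (j : ℕ) * g ^ (c : ℕ)

theorem IsMonomialBasis.adjoin_eq_top {b : Module.Basis (Fin 6 × Fin 3 × Fin 2) k B} {y t g : B}
    (hb : IsMonomialBasis b y t g) : Algebra.adjoin k {y, t, g} = ⊤ := by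
  refine Algebra.adjoin_eq_top_of_basis b fun ⟨i, j, c⟩ => ?_
  have mem (s : B) (hs : s ∈ ({y, t, g} : Set B)) (n : ℕ) : s ^ n ∈ Algebra.adjoin k {y, t, g} :=
    Subalgebra.pow_mem _ (Algebra.subset_adjoin hs) n
  rw [hb]
  exact Subalgebra.mul_mem _ (Subalgebra.mul_mem _ (mem y (by simp) _) (mem t (by simp) _))
    (mem g (by simp) _)

noncomputable def monomialLift (b : Module.Basis (Fin 6 × Fin 3 × Fin 2) k B) (Y T G : A) :
    B →ₗ[k] A :=
  b.constr k fun p => Y ^ (p.1 : ℕ) * T ^ (p.2.1 : ℕ) * G ^ (p.2.2 : ℕ)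

variable {b : Module.Basis (Fin 6 × Fin 3 × Fin 2) k B} {y t g : B} {Y T G : A}
  (hb : IsMonomialBasis b y t g) (hB : BosonizationRelations y t g)
  (hA : BosonizationRelations Y T G)
include hb hB hA

theorem monomialLift_pow_mul_pow_mul_pow (n j c : ℕ) :
    monomialLift b Y T G (y ^ n * t ^ j * g ^ c) = Y ^ n * T ^ j * G ^ c := by
  have hbasis (i : Fin 6) (j : Fin 3) (e : Fin 2) :
      monomialLift b Y T G (y ^ (i : ℕ) * t ^ (j : ℕ) * g ^ (e : ℕ))
        = Y ^ (i : ℕ) * T ^ (j : ℕ) * G ^ (e : ℕ) := by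
    rw [← hb, monomialLift, Module.Basis.constr_basis]
  rw [pow_eq_pow_mod n hB.y_pow_six, pow_eq_pow_mod n hA.y_pow_six,
    pow_eq_pow_mod c (pow_two g ▸ hB.g_mul_self), pow_eq_pow_mod c (pow_two G ▸ hA.g_mul_self)]
  cases j with
  | zero => exact hbasis ⟨n % 6, by omega⟩ 0 ⟨c % 2, by omega⟩
  | succ j =>
    rw [pow_succ_eq_pow_mod_succ hB.t_pow_three, pow_succ_eq_pow_mod_succ hA.t_pow_three]
    exact hbasis ⟨n % 6, by omega⟩ ⟨j % 2 + 1, by omega⟩ ⟨c % 2, by omega⟩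

theorem monomialLift_pow_mul_aeval_mul_pow (n c : ℕ) (p : k[X]) :
    monomialLift b Y T G (y ^ n * aeval t p * g ^ c) = Y ^ n * aeval T p * G ^ c := by
  induction p using Polynomial.induction_on' with
  | add p q hp hq => simp only [map_add, mul_add, add_mul, hp, hq]
  | monomial j r =>
    simp only [aeval_monomial, Algebra.algebraMap_eq_smul_one, smul_mul_assoc, one_mul,
      mul_smul_comm, map_smul, monomialLift_pow_mul_pow_mul_pow hb hB hA]

theorem monomialLift_mul_y (u : B) :
    monomialLift b Y T G (u * y) = monomialLift b Y T G u * Y := by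
  refine LinearMap.map_mul_right_of_basis _ b (fun ⟨i, j, c⟩ => ?_) u
  have hB_shift : (t + 2) ^ (j : ℕ) = aeval t ((X + 2 : k[X]) ^ (j : ℕ)) := by simp [map_ofNat]
  have hA_shift : (T + 2) ^ (j : ℕ) = aeval T ((X + 2 : k[X]) ^ (j : ℕ)) := by simp [map_ofNat]
  rw [hb, monomialLift_pow_mul_pow_mul_pow hb hB hA, hB.pow_mul_pow_mul_pow_mul_y,
    hA.pow_mul_pow_mul_pow_mul_y, hB_shift, hA_shift]
  rcases Nat.even_or_odd c with hc | hc
  · simp only [hc.neg_pow, monomialLift_pow_mul_aeval_mul_pow hb hB hA]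
  · simp only [hc.neg_pow, mul_neg, map_neg, monomialLift_pow_mul_aeval_mul_pow hb hB hA]

theorem monomialLift_mul_t (u : B) :
    monomialLift b Y T G (u * t) = monomialLift b Y T G u * T := by
  refine LinearMap.map_mul_right_of_basis _ b (fun ⟨i, j, c⟩ => ?_) u
  rw [hb, hB.pow_mul_pow_mul_pow_mul_t, monomialLift_pow_mul_pow_mul_pow hb hB hA,
    monomialLift_pow_mul_pow_mul_pow hb hB hA, hA.pow_mul_pow_mul_pow_mul_t]

theorem monomialLift_mul_g (u : B) :
    monomialLift b Y T G (u * g) = monomialLift b Y T G u * G := by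
  refine LinearMap.map_mul_right_of_basis _ b (fun ⟨i, j, c⟩ => ?_) u
  rw [hb, mul_assoc, ← pow_succ, monomialLift_pow_mul_pow_mul_pow hb hB hA,
    monomialLift_pow_mul_pow_mul_pow hb hB hA]
  simp only [pow_succ, mul_assoc]

noncomputable def monomialAlgHom : B →ₐ[k] A :=
  have lift := monomialLift_pow_mul_pow_mul_pow hb hB hA
  have lift_one : monomialLift b Y T G 1 = 1 := by simpa using lift 0 0 0
  have lift_y : monomialLift b Y T G y = Y := by simpa using lift 1 0 0
  have lift_t : monomialLift b Y T G t = T := by simpa using lift 0 1 0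
  have lift_g : monomialLift b Y T G g = G := by simpa using lift 0 0 1
  AlgHom.ofLinearMap (monomialLift b Y T G) lift_one
    (LinearMap.map_mul_of_adjoin_eq_top _ hb.adjoin_eq_top lift_one (by
      simp only [Set.mem_insert_iff, Set.mem_singleton_iff, forall_eq_or_imp, forall_eq]
      refine ⟨fun u => ?_, fun u => ?_, fun u => ?_⟩
      · rw [monomialLift_mul_y hb hB hA, lift_y]
      · rw [monomialLift_mul_t hb hB hA, lift_t]
      · rw [monomialLift_mul_g hb hB hA, lift_g]))

theorem monomialAlgHom_pow_mul_pow_mul_pow (n j c : ℕ) :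
    monomialAlgHom hb hB hA (y ^ n * t ^ j * g ^ c) = Y ^ n * T ^ j * G ^ c :=
  monomialLift_pow_mul_pow_mul_pow hb hB hA n j c

end MonomialBasis

section Matrices

open Matrix

variable {k K : Type} [Field k] [Field K]

theorem Tmat_mapMatrix (f : k →+* K) : f.mapMatrix (Tmat k) = Tmat K := by
  ext i j; fin_cases i <;> fin_cases j <;> simp [Tmat, map_ofNat]

theorem Ymat_mapMatrix (f : k →+* K) : f.mapMatrix (Ymat k) = Ymat K := by
  ext i j; fin_cases i <;> fin_cases j <;> simp [Ymat]

theorem Xmat_mapMatrix (f : k →+* K) : f.mapMatrix (Xmat k) = Xmat K := by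
  ext i j; fin_cases i <;> fin_cases j <;> simp [Xmat]

theorem Gmat_mapMatrix (f : k →+* K) : f.mapMatrix (Gmat k) = Gmat K := by
  ext i j; fin_cases i <;> fin_cases j <;> simp [Gmat]

variable (k) [CharP k 3]

theorem bosonizationRelations_matrices :
    BosonizationRelations (Ymat k) (Tmat k) (Gmat k) := by
  have h : BosonizationRelations (Ymat (ZMod 3)) (Tmat (ZMod 3)) (Gmat (ZMod 3)) :=
    ⟨by decide, by decide, by decide, by decide, by decide, by decide⟩
  simpa only [Ymat_mapMatrix, Tmat_mapMatrix, Gmat_mapMatrix]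
    using h.map (ZMod.castHom (dvd_refl 3) k).mapMatrix

theorem Ymat_mul_self_sub_one : Ymat k * Ymat k - 1 = Xmat k := by
  have h : Ymat (ZMod 3) * Ymat (ZMod 3) - 1 = Xmat (ZMod 3) := by decide
  simpa only [map_mul, map_sub, map_one, Ymat_mapMatrix, Xmat_mapMatrix]
    using congrArg (ZMod.castHom (dvd_refl 3) k).mapMatrix h

theorem Tmat_sq_sub_one_mul_one_add_Gmat :
    (Tmat k ^ 2 - 1) * (1 + Gmat k) = single 0 0 1 := by
  have h : (Tmat (ZMod 3) ^ 2 - 1) * (1 + Gmat (ZMod 3)) = single 0 0 1 := by decide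
  simpa only [map_mul, map_sub, map_add, map_one, map_pow, Tmat_mapMatrix, Gmat_mapMatrix,
      RingHom.mapMatrix_single_one]
    using congrArg (ZMod.castHom (dvd_refl 3) k).mapMatrix h

theorem exists_Ymat_pow_mul_single (i : Fin 6) :
    ∃ n : ℕ, Ymat k ^ n * single 0 0 1 = single i 0 1 := by
  obtain ⟨n, h⟩ : ∃ n : Fin 6, Ymat (ZMod 3) ^ (n : ℕ) * single 0 0 1 = single i 0 1 := by
    revert i; decide
  exact ⟨n, by simpa only [map_mul, map_pow, Ymat_mapMatrix, RingHom.mapMatrix_single_one]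
    using congrArg (ZMod.castHom (dvd_refl 3) k).mapMatrix h⟩

theorem exists_single_mul_Ymat_pow (j : Fin 6) :
    ∃ n : ℕ, single 0 0 1 * Ymat k ^ n = single 0 j 1 := by
  obtain ⟨n, h⟩ : ∃ n : Fin 6, single 0 0 1 * Ymat (ZMod 3) ^ (n : ℕ) = single 0 j 1 := by
    revert j; decide
  exact ⟨n, by simpa only [map_mul, map_pow, Ymat_mapMatrix, RingHom.mapMatrix_single_one]
    using congrArg (ZMod.castHom (dvd_refl 3) k).mapMatrix h⟩

theorem adjoin_Ymat_Tmat_Gmat : Algebra.adjoin k {Ymat k, Tmat k, Gmat k} = ⊤ := by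
  set S := Algebra.adjoin k {Ymat k, Tmat k, Gmat k}
  have hY : Ymat k ∈ S := Algebra.subset_adjoin (by simp)
  have hT : Tmat k ∈ S := Algebra.subset_adjoin (by simp)
  have hG : Gmat k ∈ S := Algebra.subset_adjoin (by simp)
  have h00 : single 0 0 (1 : k) ∈ S := by
    rw [← Tmat_sq_sub_one_mul_one_add_Gmat]
    exact S.mul_mem (S.sub_mem (S.pow_mem hT 2) S.one_mem) (S.add_mem S.one_mem hG)
  refine subalgebra_eq_top_of_single_mem fun i j => ?_
  obtain ⟨m, hm⟩ := exists_Ymat_pow_mul_single k i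
  obtain ⟨n, hn⟩ := exists_single_mul_Ymat_pow k j
  have hij : single i j (1 : k) = single i 0 1 * single 0 j 1 := by simp
  rw [hij, ← hm, ← hn]
  exact S.mul_mem (S.mul_mem (S.pow_mem hY m) h00) (S.mul_mem h00 (S.pow_mem hY n))

end Matrices

theorem stmt_19_general (k : Type) [Field k] [CharP k 3]
    (B : Type) [Ring B] [Algebra k B]
    (x y t1 g : B)
    (hy2 : y * y = x + 1) (hx3 : x ^ 3 = 0) (ht13 : t1 ^ 3 = t1)
    (ht1y : t1 * y - y * t1 = 2 * y)
    (hg2 : g * g = 1) (hgt1 : g * t1 = t1 * g)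
    (hgy : g * y = -(y * g))
    (bB : Module.Basis (Fin 6 × Fin 3 × Fin 2) k B)
    (hbB : ∀ (a : Fin 6) (b : Fin 3) (c : Fin 2),
      bB (a, b, c) = y ^ (a : ℕ) * t1 ^ (b : ℕ) * g ^ (c : ℕ)) :
    ∃ φ : B ≃ₐ[k] Matrix (Fin 6) (Fin 6) k,
      φ t1 = Tmat k ∧ φ y = Ymat k ∧ φ x = Xmat k ∧ φ g = Gmat k := by
  have h3 : (3 : B) = 0 := by
    rw [← map_ofNat (algebraMap k B) 3, CharP.ofNat_eq_zero, map_zero]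
  have hB : BosonizationRelations y t1 g :=
    ⟨pow_six_eq_one_of_mul_self_eq h3 hy2 hx3, ht13, ht1y, hg2, hgt1, hgy⟩
  have hA := bosonizationRelations_matrices k
  let φ := monomialAlgHom hbB hB hA
  have hφ := monomialAlgHom_pow_mul_pow_mul_pow hbB hB hA
  have hφy : φ y = Ymat k := by simpa using hφ 1 0 0
  have hφt : φ t1 = Tmat k := by simpa using hφ 0 1 0
  have hφg : φ g = Gmat k := by simpa using hφ 0 0 1
  have hsurj : Function.Surjective φ := by
    rw [← AlgHom.range_eq_top, eq_top_iff, ← adjoin_Ymat_Tmat_Gmat k, Algebra.adjoin_le_iff]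
    rintro _ (rfl | rfl | rfl)
    exacts [⟨y, hφy⟩, ⟨t1, hφt⟩, ⟨g, hφg⟩]
  have : FiniteDimensional k B := Module.Finite.of_basis bB
  have hinj : Function.Injective φ :=
    (LinearMap.injective_iff_surjective_of_finrank_eq_finrank (f := φ.toLinearMap)
      (by simp [Module.finrank_eq_card_basis bB, Module.finrank_matrix])).2 hsurj
  refine ⟨AlgEquiv.ofBijective φ ⟨hinj, hsurj⟩, hφt, hφy, ?_, hφg⟩
  change φ x = Xmat k
  rw [← Ymat_mul_self_sub_one, eq_sub_of_add_eq hy2.symm, map_sub, map_mul, map_one, hφy]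

theorem stmt_19 (k : Type) [Field k] [IsAlgClosed k] [CharP k 3]
    (B : Type) [Ring B] [Algebra k B]
    (x y t1 g : B)
    (hgen : Algebra.adjoin k {x, y, t1, g} = ⊤)
    (hy2 : y * y = x + 1) (hx3 : x ^ 3 = 0) (ht13 : t1 ^ 3 = t1)
    (ht1y : t1 * y - y * t1 = 2 * y)
    (ht1x : t1 * x - x * t1 = x + 1)
    (hxy : x * y = y * x)
    (hg2 : g * g = 1) (hgx : g * x = x * g) (hgt1 : g * t1 = t1 * g)
    (hgy : g * y = -(y * g))
    (bB : Module.Basis (Fin 6 × Fin 3 × Fin 2) k B)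
    (hbB : ∀ (a : Fin 6) (b : Fin 3) (c : Fin 2),
      bB (a, b, c) = y ^ (a : ℕ) * t1 ^ (b : ℕ) * g ^ (c : ℕ)) :
    ∃ φ : B ≃ₐ[k] Matrix (Fin 6) (Fin 6) k,
      φ t1 = Tmat k ∧ φ y = Ymat k ∧ φ x = Xmat k ∧ φ g = Gmat k :=
  stmt_19_general k B x y t1 g hy2 hx3 ht13 ht1y hg2 hgt1 hgy bB hbB
end
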